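/- arXiv:1102.4719 — 3 statements merged into one kernel-verified Lean document; each statement's English description precedes it below -/
import Mathlib

section
/- For every θ with |θ| < π/2 there exists a bounded subset Ω of SL(2,ℝ) such that for every t ≥ 0 there is w ∈ Ω with g_t · h_{−tan θ} = w · g_t · r_θ, where g_t = [[e^{t/2}, 0],[0, e^{−t/2}]], h_s = [[1, s],[0, 1]], and r_θ = [[cos θ, −sin θ],[sin θ, cos θ]]. (In particular, the set {g_t x g_{−t} : t ≥ 0} with x = [[1/cos θ, 0],[−sin θ, cos θ]] is bounded and satisfies this identity.) -/
open Real

/-!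
Put `x = !![1 / cos θ, 0; -sin θ, cos θ]`. A direct computation gives `x * r_θ = h_{-tan θ}`, so
`g_t * h_{-tan θ} = (g_t * x * g_{-t}) * (g_t * r_θ)`. Conjugating the lower triangular matrix `x`
by `g_t` only multiplies its lower-left entry by `e^{-t} ≤ 1`, so these conjugates stay bounded.
-/

noncomputable section

def geodesicFlow (t : ℝ) : Matrix (Fin 2) (Fin 2) ℝ :=
  !![exp (t / 2), 0; 0, exp (-t / 2)]

theorem geodesicFlow_neg_mul_self (t : ℝ) : geodesicFlow (-t) * geodesicFlow t = 1 := by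
  rw [geodesicFlow, geodesicFlow, Matrix.mul_fin_two, Matrix.one_fin_two]
  simp [neg_div, ← exp_add]

theorem det_geodesicFlow (t : ℝ) : (geodesicFlow t).det = 1 := by
  simp [geodesicFlow, Matrix.det_fin_two_of, neg_div, ← exp_add]

theorem geodesicFlow_conj_lowerTriangular (t a b d : ℝ) :
    geodesicFlow t * !![a, 0; b, d] * geodesicFlow (-t) = !![a, 0; exp (-t) * b, d] := by
  have hsquare : exp t = exp (t / 2) * exp (t / 2) := by rw [← exp_add, add_halves]
  rw [geodesicFlow, geodesicFlow, neg_div, neg_neg, Matrix.mul_fin_two, Matrix.mul_fin_two]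
  ext i j
  fin_cases i <;> fin_cases j <;> simp [exp_neg, hsquare] <;> field_simp

theorem abs_apply_le_of_lowerTriangular {t : ℝ} (ht : 0 ≤ t) (a b d : ℝ) (i j : Fin 2) :
    |(!![a, 0; exp (-t) * b, d] : Matrix (Fin 2) (Fin 2) ℝ) i j| ≤ |a| + |b| + |d| := by
  have hexp : exp (-t) * |b| ≤ |b| :=
    mul_le_of_le_one_left (abs_nonneg b) (exp_le_one_iff.mpr (neg_nonpos.mpr ht))
  fin_cases i <;> fin_cases j <;> simp [abs_of_pos (exp_pos _)] <;>
    linarith [abs_nonneg a, abs_nonneg b, abs_nonneg d]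

theorem lowerTriangular_mul_rotation {θ : ℝ} (hcos : cos θ ≠ 0) :
    !![1 / cos θ, 0; -sin θ, cos θ] * !![cos θ, -sin θ; sin θ, cos θ] = !![1, -tan θ; 0, 1] := by
  rw [Matrix.mul_fin_two, tan_eq_sin_div_cos]
  ext i j
  fin_cases i <;> fin_cases j <;> simp
  · field_simp
  · ring
  · ring
  · simp only [← sq, sin_sq_add_cos_sq]

end

/-- Proposition: horocycles and circles. For `|θ| < π/2` there is a bounded
subset `Ω ⊆ SL(2,ℝ)` such that for every `t ≥ 0` there is `w ∈ Ω` with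
`g_t · h_{-tan θ} = w · g_t · r_θ`. (A subset of `SL(2,ℝ)` is bounded iff its entries are
uniformly bounded.) -/
theorem horocycles_and_circles (θ : ℝ) (hθ : |θ| < Real.pi / 2) :
    ∃ Ω : Set (Matrix (Fin 2) (Fin 2) ℝ),
      (∃ M : ℝ, ∀ w ∈ Ω, ∀ i j : Fin 2, |w i j| ≤ M) ∧
      (∀ w ∈ Ω, w.det = 1) ∧
      ∀ t : ℝ, 0 ≤ t → ∃ w ∈ Ω,
        (!![Real.exp (t / 2), 0; 0, Real.exp (-t / 2)] : Matrix (Fin 2) (Fin 2) ℝ) *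
            !![1, -Real.tan θ; 0, 1] =
          w * ((!![Real.exp (t / 2), 0; 0, Real.exp (-t / 2)] : Matrix (Fin 2) (Fin 2) ℝ) *
            !![Real.cos θ, -Real.sin θ; Real.sin θ, Real.cos θ]) := by
  have hcos : cos θ ≠ 0 := (cos_pos_of_mem_Ioo (abs_lt.mp hθ)).ne'
  have hx : (!![1 / cos θ, 0; -sin θ, cos θ] : Matrix (Fin 2) (Fin 2) ℝ).det = 1 := by
    simp [Matrix.det_fin_two_of, hcos]
  refine ⟨(fun t => geodesicFlow t * !![1 / cos θ, 0; -sin θ, cos θ] * geodesicFlow (-t)) ''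
    Set.Ici 0, ⟨|1 / cos θ| + |-sin θ| + |cos θ|, ?_⟩, ?_, ?_⟩
  · rintro _ ⟨t, ht, rfl⟩
    simpa only [geodesicFlow_conj_lowerTriangular] using abs_apply_le_of_lowerTriangular ht _ _ _
  · rintro _ ⟨t, -, rfl⟩
    simp only [Matrix.det_mul, det_geodesicFlow, hx, mul_one]
  · intro t ht
    refine ⟨_, ⟨t, ht, rfl⟩, ?_⟩
    change geodesicFlow t * _ = _ * (geodesicFlow t * _)
    rw [← lowerTriangular_mul_rotation hcos]
    simp only [mul_assoc, ← mul_assoc (geodesicFlow (-t)), geodesicFlow_neg_mul_self, one_mul]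
end

section
/- Let d ≥ 2, let σ(i) = d+1−i, and for s > 0 let β(s) = (s, s², …, s^d)/(s + s² + ⋯ + s^d) ∈ ℝ_+^d. Then for every s > 0 and every j ∈ {1,…,d−1} one has y_j(β'(s)) < 0 and y'_j(β'(s)) > 0, and consequently L_{a, β'(s)}(x) < 0 for every a ∈ ℝ_+^d and every x ∈ I_a. In particular, for every s > 0 such that T_σ(β(s)) has no connections, the pair (β(s), −β'(s)) is positive. -/
open MeasureTheory Filter Set

/-- `partialSum d a i` is the point `x_i(a) = Σ_{j < i} a_j` (with `Fin d` zero-indexed, so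
`i : ℕ` ranges over `0, …, d`). -/
noncomputable def partialSum (d : ℕ) (a : Fin d → ℝ) (i : ℕ) : ℝ :=
  ∑ j ∈ Finset.univ.filter (fun j : Fin d => (j : ℕ) < i), a j

/-- `partialSumPerm d σ a i` is the point `x'_i(a) = Σ_{j=1}^i a_{σ⁻¹(j)} = Σ_{j : σ j < i} a_j`. -/
noncomputable def partialSumPerm (d : ℕ) (σ : Equiv.Perm (Fin d)) (a : Fin d → ℝ) (i : ℕ) : ℝ :=
  ∑ j ∈ Finset.univ.filter (fun j : Fin d => ((σ j : ℕ)) < i), a j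

/-- The interval `I_a = [0, Σ_i a_i)`. -/
noncomputable def ietInterval (d : ℕ) (a : Fin d → ℝ) : Set ℝ :=
  Set.Ico 0 (partialSum d a d)

/-- The interval exchange transformation `T_σ(a)`: on the interval
`I_i = [x_{i-1}(a), x_i(a))` (zero-indexed: `[x_i, x_{i+1})` for `i : Fin d`) it translates by
`x'_{σ(i)-1}(a) - x_{i-1}(a)`.  Outside `I_a` it is (arbitrarily) the identity. -/
noncomputable def iet (d : ℕ) (σ : Equiv.Perm (Fin d)) (a : Fin d → ℝ) (x : ℝ) : ℝ :=
  if h : ∃ i : Fin d, partialSum d a (i : ℕ) ≤ x ∧ x < partialSum d a ((i : ℕ) + 1) then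
    x - partialSum d a ((h.choose : Fin d) : ℕ) + partialSumPerm d σ a ((σ h.choose : Fin d) : ℕ)
  else x

/-- `σ` is irreducible: no `k` with `1 ≤ k < d` such that `σ({1,…,k}) = {1,…,k}`. -/
def IETIrreducible (d : ℕ) (σ : Equiv.Perm (Fin d)) : Prop :=
  ∀ k : ℕ, 0 < k → k < d → ¬ (∀ i : Fin d, (i : ℕ) < k → (σ i : ℕ) < k)

/-- The function `L_{a,b} : I_a → ℝ`, equal to `y_i(b) - y'_{σ(i)}(b)` on `I_i(a)`
(extended by `0` off `I_a`). -/
noncomputable def ietL (d : ℕ) (σ : Equiv.Perm (Fin d)) (a b : Fin d → ℝ) (x : ℝ) : ℝ :=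
  if h : ∃ i : Fin d, partialSum d a (i : ℕ) ≤ x ∧ x < partialSum d a ((i : ℕ) + 1) then
    partialSum d b ((h.choose : ℕ) + 1) - partialSumPerm d σ b ((σ h.choose : ℕ) + 1)
  else 0

/-- A connection `(i,j,m)` of `T = T_σ(a)`: `i, j ∈ {0,…,d-1}`, `m > 0`, `T^m(x_i) = x_j`. -/
def IsConnection (d : ℕ) (σ : Equiv.Perm (Fin d)) (a : Fin d → ℝ) (i j m : ℕ) : Prop :=
  i < d ∧ j < d ∧ 0 < m ∧ (iet d σ a)^[m] (partialSum d a i) = partialSum d a j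

/-- `μ ∈ ℳ_a`: a non-atomic `T_σ(a)`-invariant Borel probability measure on `I_a`. -/
def IsIETInvariantMeasure (d : ℕ) (σ : Equiv.Perm (Fin d)) (a : Fin d → ℝ)
    (μ : Measure ℝ) : Prop :=
  IsProbabilityMeasure μ ∧ NoAtoms μ ∧ μ (ietInterval d a)ᶜ = 0 ∧
    Measure.map (iet d σ a) μ = μ

/-- `(a,b)` is a positive pair. -/
def IsPositivePair (d : ℕ) (σ : Equiv.Perm (Fin d)) (a b : Fin d → ℝ) : Prop :=
  (∀ μ : Measure ℝ, IsIETInvariantMeasure d σ a μ → 0 < ∫ x, ietL d σ a b x ∂μ) ∧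
  (∀ i j m : ℕ, IsConnection d σ a i j m →
    partialSum d b i - partialSum d b j <
      ∑ n ∈ Finset.range m, ietL d σ a b ((iet d σ a)^[n] (partialSum d a i)))

/-- `ε_n(a)`. -/
noncomputable def ietEps (d : ℕ) (σ : Equiv.Perm (Fin d)) (a : Fin d → ℝ) (n : ℕ) : ℝ :=
  sInf { v : ℝ | ∃ i j k l : ℕ, 1 ≤ i ∧ i ≤ d - 1 ∧ 1 ≤ j ∧ j ≤ d - 1 ∧
    k ≤ n ∧ l ≤ n ∧ (i, k) ≠ (j, l) ∧
    v = |(iet d σ a)^[k] (partialSum d a i) - (iet d σ a)^[l] (partialSum d a j)| }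

/-- `a` is of recurrence type: `limsup n ε_n(a) > 0`. -/
def OfRecurrenceType (d : ℕ) (σ : Equiv.Perm (Fin d)) (a : Fin d → ℝ) : Prop :=
  0 < Filter.limsup (fun n : ℕ => (n : ℝ) * ietEps d σ a n) Filter.atTop

/-- `a` is of bounded type: `liminf n ε_n(a) > 0`. -/
def OfBoundedType (d : ℕ) (σ : Equiv.Perm (Fin d)) (a : Fin d → ℝ) : Prop :=
  0 < Filter.liminf (fun n : ℕ => (n : ℝ) * ietEps d σ a n) Filter.atTop

/-- The (topological) support of a measure on `ℝ`. -/
def measSupport (μ : Measure ℝ) : Set ℝ :=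
  {x : ℝ | ∀ r : ℝ, 0 < r → 0 < μ (Set.Ioo (x - r) (x + r))}

/-- `μ` is a finite regular Borel measure on `ℝ` which is `(C,α)`-decaying and `D`-Federer. -/
def IsDecayingFederer (μ : Measure ℝ) (C α D : ℝ) : Prop :=
  IsFiniteMeasure μ ∧ μ.Regular ∧
  ∀ x ∈ measSupport μ, ∀ ε r : ℝ, 0 < ε → ε < 1 → 0 < r → r < 1 →
    μ (Set.Ioo (x - ε * r) (x + ε * r)) ≤
      ENNReal.ofReal (C * ε ^ α) * μ (Set.Ioo (x - r) (x + r)) ∧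
    μ (Set.Ioo (x - 3 * r) (x + 3 * r)) ≤
      ENNReal.ofReal D * μ (Set.Ioo (x - r) (x + r))

/-- `μ` is decaying and Federer: `(C,α)`-decaying and `D`-Federer for some `C, α, D > 0`. -/
def DecayingFederer (μ : Measure ℝ) : Prop :=
  ∃ C α D : ℝ, 0 < C ∧ 0 < α ∧ 0 < D ∧ IsDecayingFederer μ C α D

/-- The normalized Mahler curve `β(s) = (s, s², …, s^d) / (s + s² + ⋯ + s^d)`. -/
noncomputable def mahlerCurve (d : ℕ) (s : ℝ) : Fin d → ℝ :=
  fun i => s ^ ((i : ℕ) + 1) / ∑ j : Fin d, s ^ ((j : ℕ) + 1)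

/-! As `s` grows, the weights `s ^ (i + 1)` of `β(s)` move towards the high indices, so every
proper initial partial sum `y_j(β'(s))` is negative: its numerator is
`∑_{i < j ≤ k} (i - k) s ^ (i + k + 1)`. For the reversal `σ` the sums `y'_j` are complementary to
initial sums, hence positive, and `L_{a, β'(s)} = y_{i+1} - y'_{σ i + 1}` is negative on every
piece. Then `-L_{a, β'(s)}` is positive on `I_a`, which carries every `μ ∈ ℳ_a`, while the
connection condition is void. -/

open Finset in
theorem sum_mul_sum_sub_sum_mul_sum_pow {ι : Type*} (e : ι → ℕ) (A B : Finset ι) (s : ℝ) :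
    (∑ i ∈ A, ((e i : ℝ) + 1) * s ^ e i) * (∑ k ∈ B, s ^ (e k + 1)) -
        (∑ i ∈ A, s ^ (e i + 1)) * ∑ k ∈ B, ((e k : ℝ) + 1) * s ^ e k =
      ∑ i ∈ A, ∑ k ∈ B, ((e i : ℝ) - e k) * s ^ (e i + e k + 1) := by
  simp only [sum_mul_sum, ← sum_sub_distrib]
  exact sum_congr rfl fun i _ => sum_congr rfl fun k _ => by ring

theorem hasDerivAt_sum_pow_succ {ι : Type*} (e : ι → ℕ) (S : Finset ι) (t : ℝ) :
    HasDerivAt (fun t : ℝ => ∑ i ∈ S, t ^ (e i + 1)) (∑ i ∈ S, ((e i : ℝ) + 1) * t ^ e i) t :=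
  HasDerivAt.fun_sum fun i _ => by simpa using hasDerivAt_pow (e i + 1) t

theorem integral_pos_of_pos_of_measure_compl_eq_zero {α : Type*} [MeasurableSpace α]
    {μ : Measure α} [NeZero μ] {s : Set α} {f : α → ℝ} (hs : μ sᶜ = 0) (hf : Integrable f μ)
    (hpos : ∀ x ∈ s, 0 < f x) : 0 < ∫ x, f x ∂μ := by
  have hae : ∀ᵐ x ∂μ, x ∈ s := mem_ae_iff.2 hs
  rw [integral_pos_iff_support_of_nonneg_ae (hae.mono fun x hx => (hpos x hx).le) hf]
  have hμs : μ s ≠ 0 := fun h0 => NeZero.ne μ <| Measure.measure_univ_eq_zero.1 <|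
    le_antisymm (by simpa [h0, hs] using measure_univ_le_add_compl (μ := μ) s) bot_le
  exact pos_iff_ne_zero.2 fun h0 => hμs (measure_mono_null (fun x hx => (hpos x hx).ne') h0)

section IntervalExchange

variable {d : ℕ} {σ : Equiv.Perm (Fin d)} {a : Fin d → ℝ}

theorem partialSum_zero (f : Fin d → ℝ) : partialSum d f 0 = 0 := by
  simp [partialSum]

theorem partialSum_self (f : Fin d → ℝ) : partialSum d f d = ∑ i, f i := by
  rw [partialSum, Finset.filter_true_of_mem fun i _ => i.isLt]

theorem partialSum_mono (ha : ∀ i, 0 ≤ a i) : Monotone (partialSum d a) := fun _ _ hjk =>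
  Finset.sum_le_sum_of_subset_of_nonneg
    (Finset.monotone_filter_right _ fun _ _ hi => hi.trans_le hjk)
    fun i _ _ => ha i

theorem exists_mem_Ico_partialSum {x : ℝ} (hx : x ∈ ietInterval d a) :
    ∃ i : Fin d, partialSum d a i ≤ x ∧ x < partialSum d a ((i : ℕ) + 1) := by
  have hex : ∃ n, x < partialSum d a n := ⟨d, hx.2⟩
  have hpos : Nat.find hex ≠ 0 := fun h0 => by
    have hlt := Nat.find_spec hex
    rw [h0, partialSum_zero] at hlt
    exact hx.1.not_gt hlt
  have hle : Nat.find hex ≤ d := Nat.find_min' hex hx.2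
  refine ⟨⟨Nat.find hex - 1, by omega⟩,
    not_lt.1 (Nat.find_min hex (show Nat.find hex - 1 < Nat.find hex by omega)), ?_⟩
  simpa [Nat.sub_add_cancel (Nat.one_le_iff_ne_zero.2 hpos)] using Nat.find_spec hex

theorem eq_of_mem_Ico_partialSum (ha : ∀ i, 0 ≤ a i) {x : ℝ} {i k : Fin d}
    (hi : x ∈ Set.Ico (partialSum d a i) (partialSum d a ((i : ℕ) + 1)))
    (hk : x ∈ Set.Ico (partialSum d a k) (partialSum d a ((k : ℕ) + 1))) : i = k := by
  by_contra hik
  rcases Fin.lt_or_lt_of_ne hik with h | h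
  · linarith [hi.2, hk.1, partialSum_mono ha (Nat.succ_le_of_lt h)]
  · linarith [hk.2, hi.1, partialSum_mono ha (Nat.succ_le_of_lt h)]

theorem ietL_eq_sum_indicator (ha : ∀ i, 0 ≤ a i) (b : Fin d → ℝ) :
    ietL d σ a b = fun x => ∑ i : Fin d,
      (Set.Ico (partialSum d a i) (partialSum d a ((i : ℕ) + 1))).indicator
        (fun _ => partialSum d b ((i : ℕ) + 1) - partialSumPerm d σ b ((σ i : ℕ) + 1)) x := by
  funext x
  rw [ietL]
  split_ifs with hx
  · rw [Finset.sum_eq_single_of_mem hx.choose (Finset.mem_univ _)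
      fun i _ hi => Set.indicator_of_notMem (fun hxi => hi
        (eq_of_mem_Ico_partialSum ha hxi hx.choose_spec)) _,
      Set.indicator_of_mem (show x ∈ Set.Ico _ _ from hx.choose_spec)]
  · exact (Finset.sum_eq_zero fun i _ =>
      Set.indicator_of_notMem (s := Set.Ico _ _) (fun hxi => hx ⟨i, hxi⟩) _).symm

theorem integrable_ietL (ha : ∀ i, 0 ≤ a i) (b : Fin d → ℝ) (μ : Measure ℝ) [IsFiniteMeasure μ] :
    Integrable (ietL d σ a b) μ := by
  rw [ietL_eq_sum_indicator ha]
  exact integrable_finsetSum _ fun i _ => (integrable_const _).indicator measurableSet_Ico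

theorem ietL_neg (b : Fin d → ℝ) (x : ℝ) :
    ietL d σ a (fun i => -b i) x = -ietL d σ a b x := by
  rw [ietL, ietL]
  split_ifs
  · simp only [partialSum, partialSumPerm, Finset.sum_neg_distrib]
    ring
  · simp

theorem partialSumPerm_of_reverse (hσ : ∀ i : Fin d, (σ i : ℕ) = d - 1 - (i : ℕ))
    (f : Fin d → ℝ) {j : ℕ} (hj : j ≤ d) :
    partialSumPerm d σ f j = partialSum d f d - partialSum d f (d - j) := by
  have hfilter : Finset.univ.filter (fun i : Fin d => (σ i : ℕ) < j)
      = Finset.univ.filter (fun i : Fin d => ¬ (i : ℕ) < d - j) :=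
    Finset.filter_congr fun i _ => by rw [hσ i]; omega
  rw [partialSumPerm, partialSum_self, partialSum, hfilter, eq_sub_iff_add_eq, add_comm]
  exact Finset.sum_filter_add_sum_filter_not _ _ _

end IntervalExchange

section MahlerCurve

variable {d : ℕ} {s : ℝ}

theorem sum_pow_succ_pos (hd : 0 < d) (hs : 0 < s) : 0 < ∑ i : Fin d, s ^ ((i : ℕ) + 1) :=
  Finset.sum_pos (fun _ _ => pow_pos hs _) ⟨⟨0, hd⟩, Finset.mem_univ _⟩

theorem mahlerCurve_nonneg (hs : 0 < s) (i : Fin d) : 0 ≤ mahlerCurve d s i :=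
  div_nonneg (pow_pos hs _).le (Finset.sum_nonneg fun _ _ => (pow_pos hs _).le)

theorem differentiableAt_mahlerCurve (hd : 0 < d) (hs : 0 < s) :
    DifferentiableAt ℝ (mahlerCurve d) s :=
  differentiableAt_pi.2 fun _ => (differentiableAt_pow _).div
    (hasDerivAt_sum_pow_succ Fin.val Finset.univ s).differentiableAt (sum_pow_succ_pos hd hs).ne'

theorem sum_deriv_mahlerCurve (hd : 0 < d) (hs : 0 < s) (S : Finset (Fin d)) :
    ∑ i ∈ S, deriv (mahlerCurve d) s i =
      (∑ i ∈ S, ∑ k ∈ Sᶜ, (((i : ℕ) : ℝ) - (k : ℕ)) * s ^ ((i : ℕ) + (k : ℕ) + 1)) /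
        (∑ i : Fin d, s ^ ((i : ℕ) + 1)) ^ 2 := by
  have hsum : HasDerivAt (fun t => ∑ i ∈ S, mahlerCurve d t i)
      (∑ i ∈ S, deriv (mahlerCurve d) s i) s :=
    HasDerivAt.fun_sum fun i _ =>
      hasDerivAt_pi.1 (differentiableAt_mahlerCurve hd hs).hasDerivAt i
  have hquot := (hasDerivAt_sum_pow_succ Fin.val S s).div
    (hasDerivAt_sum_pow_succ Fin.val Finset.univ s) (sum_pow_succ_pos hd hs).ne'
  rw [show (fun t => ∑ i ∈ S, mahlerCurve d t i) = fun t =>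
      (∑ i ∈ S, t ^ ((i : ℕ) + 1)) / ∑ i : Fin d, t ^ ((i : ℕ) + 1) from
    funext fun t => (Finset.sum_div ..).symm] at hsum
  rw [hsum.unique hquot, ← sum_mul_sum_sub_sum_mul_sum_pow Fin.val]
  congr 1
  rw [← Finset.sum_add_sum_compl S, ← Finset.sum_add_sum_compl S]
  ring

theorem partialSum_deriv_mahlerCurve_self (hd : 0 < d) (hs : 0 < s) :
    partialSum d (deriv (mahlerCurve d) s) d = 0 := by
  rw [partialSum_self, sum_deriv_mahlerCurve hd hs, Finset.compl_univ]
  simp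

theorem partialSum_deriv_mahlerCurve_neg (hs : 0 < s) {j : ℕ} (hj0 : 0 < j) (hjd : j < d) :
    partialSum d (deriv (mahlerCurve d) s) j < 0 := by
  rw [partialSum, sum_deriv_mahlerCurve (hj0.trans hjd) hs]
  refine div_neg_of_neg_of_pos (Finset.sum_neg (fun i hi => Finset.sum_neg (fun k hk => ?_)
    ⟨⟨j, hjd⟩, by simp⟩) ⟨⟨0, hj0.trans hjd⟩, by simpa⟩)
    (pow_pos (sum_pow_succ_pos (hj0.trans hjd) hs) 2)
  simp only [Finset.mem_filter, Finset.mem_univ, true_and, Finset.mem_compl, not_lt] at hi hk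
  exact mul_neg_of_neg_of_pos (sub_neg.2 (by exact_mod_cast hi.trans_le hk)) (pow_pos hs _)

theorem partialSum_deriv_mahlerCurve_nonpos (hs : 0 < s) {j : ℕ} (hj : j ≤ d) :
    partialSum d (deriv (mahlerCurve d) s) j ≤ 0 := by
  rcases Nat.eq_zero_or_pos j with rfl | hj0
  · exact (partialSum_zero _).le
  rcases hj.lt_or_eq with hjd | rfl
  · exact (partialSum_deriv_mahlerCurve_neg hs hj0 hjd).le
  · exact (partialSum_deriv_mahlerCurve_self hj0 hs).le

variable {σ : Equiv.Perm (Fin d)}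

theorem partialSumPerm_deriv_mahlerCurve_pos (hσ : ∀ i : Fin d, (σ i : ℕ) = d - 1 - (i : ℕ))
    (hs : 0 < s) {j : ℕ} (hj0 : 0 < j) (hjd : j < d) :
    0 < partialSumPerm d σ (deriv (mahlerCurve d) s) j := by
  rw [partialSumPerm_of_reverse hσ _ hjd.le, partialSum_deriv_mahlerCurve_self (hj0.trans hjd) hs]
  linarith [partialSum_deriv_mahlerCurve_neg hs (Nat.sub_pos_of_lt hjd)
    (Nat.sub_lt (hj0.trans hjd) hj0)]

theorem partialSumPerm_deriv_mahlerCurve_nonneg (hσ : ∀ i : Fin d, (σ i : ℕ) = d - 1 - (i : ℕ))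
    (hd : 0 < d) (hs : 0 < s) {j : ℕ} (hj : j ≤ d) :
    0 ≤ partialSumPerm d σ (deriv (mahlerCurve d) s) j := by
  rw [partialSumPerm_of_reverse hσ _ hj, partialSum_deriv_mahlerCurve_self hd hs]
  linarith [partialSum_deriv_mahlerCurve_nonpos hs (d.sub_le j)]

theorem ietL_deriv_mahlerCurve_neg (hσ : ∀ i : Fin d, (σ i : ℕ) = d - 1 - (i : ℕ))
    (hd : 2 ≤ d) (hs : 0 < s) {a : Fin d → ℝ} {x : ℝ} (hx : x ∈ ietInterval d a) :
    ietL d σ a (deriv (mahlerCurve d) s) x < 0 := by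
  rw [ietL, dif_pos (exists_mem_Ico_partialSum hx)]
  set c := (exists_mem_Ico_partialSum hx).choose
  rcases (show (c : ℕ) + 1 < d ∨ (c : ℕ) + 1 = d by omega) with hcd | hcd
  · linarith [partialSum_deriv_mahlerCurve_neg hs (Nat.succ_pos c) hcd,
      partialSumPerm_deriv_mahlerCurve_nonneg hσ (by omega) hs (j := (σ c : ℕ) + 1) (by omega)]
  · -- the last piece is sent to the front: `σ c = 0`
    rw [hcd, partialSum_deriv_mahlerCurve_self (by omega) hs, hσ c,
      show d - 1 - (c : ℕ) + 1 = 1 by omega]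
    linarith [partialSumPerm_deriv_mahlerCurve_pos hσ hs one_pos (by omega : 1 < d)]

end MahlerCurve

/-- For `d ≥ 2`, `σ(i) = d + 1 - i` (zero-indexed: `σ(i) = d - 1 - i`) and
`β` the normalized Mahler curve: for every `s > 0` and `1 ≤ j ≤ d - 1` one has
`y_j(β'(s)) < 0` and `y'_j(β'(s)) > 0`; consequently `L_{a, β'(s)} < 0` on `I_a` for every
`a ∈ ℝ₊^d`; and for every `s > 0` such that `T_σ(β(s))` has no connections, the pair
`(β(s), -β'(s))` is positive. -/
theorem mahler_curve_positive (d : ℕ) (hd : 2 ≤ d) (σ : Equiv.Perm (Fin d))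
    (hσ : ∀ i : Fin d, (σ i : ℕ) = d - 1 - (i : ℕ)) :
    (∀ s : ℝ, 0 < s → ∀ j : ℕ, 1 ≤ j → j ≤ d - 1 →
      partialSum d (deriv (mahlerCurve d) s) j < 0 ∧
      0 < partialSumPerm d σ (deriv (mahlerCurve d) s) j) ∧
    (∀ s : ℝ, 0 < s → ∀ a : Fin d → ℝ, (∀ i, 0 < a i) →
      ∀ x ∈ ietInterval d a, ietL d σ a (deriv (mahlerCurve d) s) x < 0) ∧
    (∀ s : ℝ, 0 < s → (¬ ∃ i j m : ℕ, IsConnection d σ (mahlerCurve d s) i j m) →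
      IsPositivePair d σ (mahlerCurve d s) (fun i => -(deriv (mahlerCurve d) s i))) := by
  refine ⟨fun s hs j hj1 hj2 => ⟨partialSum_deriv_mahlerCurve_neg hs (by omega) (by omega),
      partialSumPerm_deriv_mahlerCurve_pos hσ hs (by omega) (by omega)⟩,
    fun s hs a _ x hx => ietL_deriv_mahlerCurve_neg hσ hd hs hx,
    fun s hs hnc => ⟨fun μ hμ => ?_, fun i j m hc => (hnc ⟨i, j, m, hc⟩).elim⟩⟩
  obtain ⟨_, -, hnull, -⟩ := hμ
  refine integral_pos_of_pos_of_measure_compl_eq_zero hnull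
    (integrable_ietL (mahlerCurve_nonneg hs) _ μ) fun x hx => ?_
  rw [ietL_neg]
  exact neg_pos.2 (ietL_deriv_mahlerCurve_neg hσ hd hs hx)
end

section
/- Let σ be an irreducible permutation of {1,…,d} and define b₀ ∈ ℝ^d by (b₀)_i = σ(i) − i. Then for every j ∈ {1,…,d−1} one has y_j(b₀) > 0 and y'_j(b₀) < 0; consequently Q(e_i, b₀) > 0 for every i ∈ {1,…,d}, and hence L_{a,b₀}(x) > 0 for every a ∈ ℝ_+^d and every x ∈ I_a. -/
open MeasureTheory Filter Set

/-- Veech's alternating bilinear form `Q` associated to `σ`, determined by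
`Q(e_i, e_j) = 1` if `i > j` and `σ(i) < σ(j)`, `= -1` if `i < j` and `σ(i) > σ(j)`,
`= 0` otherwise. -/
noncomputable def Qform (d : ℕ) (σ : Equiv.Perm (Fin d)) (u v : Fin d → ℝ) : ℝ :=
  ∑ i : Fin d, ∑ j : Fin d, u i * v j *
    (if (j : ℕ) < (i : ℕ) ∧ (σ i : ℕ) < (σ j : ℕ) then 1
     else if (i : ℕ) < (j : ℕ) ∧ (σ j : ℕ) < (σ i : ℕ) then -1 else 0)


lemma sum_range_lt_sum (U : Finset ℕ) (n : ℕ) (hU : U.card = n)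
    (hne : U ≠ Finset.range n) :
    ∑ k ∈ Finset.range n, k < ∑ u ∈ U, u := by
  set R := Finset.range n with hR
  have hRcard : R.card = n := Finset.card_range n
  have htU : (U \ R).card + (U ∩ R).card = U.card := Finset.card_sdiff_add_card_inter U R
  have htR : (R \ U).card + (R ∩ U).card = R.card := Finset.card_sdiff_add_card_inter R U
  have hinter : (U ∩ R).card = (R ∩ U).card := by rw [Finset.inter_comm]
  have htt : (U \ R).card = (R \ U).card := by omega
  have ht0 : 0 < (U \ R).card := by
    rcases Nat.eq_zero_or_pos (U \ R).card with h | h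
    · exfalso
      have hsub : U ⊆ R := by
        intro u hu
        by_contra hur
        have hm : u ∈ U \ R := Finset.mem_sdiff.mpr ⟨hu, hur⟩
        have := Finset.card_pos.mpr ⟨u, hm⟩
        omega
      exact hne (Finset.eq_of_subset_of_card_le hsub (by omega))
    · exact h
  have hn1 : 1 ≤ n := by
    have := Finset.card_le_card (Finset.sdiff_subset : U \ R ⊆ U)
    omega
  have h1 : ∑ k ∈ R \ U, k ≤ (R \ U).card * (n - 1) := by
    have := Finset.sum_le_card_nsmul (R \ U) id (n - 1) (fun x hx => by
      have := (Finset.mem_sdiff.mp hx).1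
      rw [hR, Finset.mem_range] at this
      simpa using by omega)
    simpa using this
  have h2 : (U \ R).card * n ≤ ∑ u ∈ U \ R, u := by
    have := Finset.card_nsmul_le_sum (U \ R) id n (fun x hx => by
      have := (Finset.mem_sdiff.mp hx).2
      rw [hR, Finset.mem_range] at this
      simpa using by omega)
    simpa using this
  have hmul : (R \ U).card * (n - 1) < (U \ R).card * n := by
    rw [htt]
    have hc : 0 < (R \ U).card := htt ▸ ht0
    have hn' : n = (n - 1) + 1 := by omega
    calc (R \ U).card * (n - 1) < (R \ U).card * (n - 1) + (R \ U).card := by omega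
      _ = (R \ U).card * ((n - 1) + 1) := by ring
      _ = (R \ U).card * n := by rw [← hn']
  have key : ∑ k ∈ R \ U, k < ∑ u ∈ U \ R, u := by omega
  have e1 : ∑ u ∈ U ∩ R, u + ∑ u ∈ U \ R, u = ∑ u ∈ U, u :=
    Finset.sum_inter_add_sum_sdiff U R _
  have e2 : ∑ k ∈ R ∩ U, k + ∑ k ∈ R \ U, k = ∑ k ∈ R, k :=
    Finset.sum_inter_add_sum_sdiff R U _
  have einter : ∑ u ∈ U ∩ R, u = ∑ u ∈ R ∩ U, u := by rw [Finset.inter_comm]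
  omega

lemma image_val_filter_lt (d j : ℕ) (hj : j ≤ d) :
    (Finset.univ.filter (fun i : Fin d => (i : ℕ) < j)).image Fin.val = Finset.range j := by
  ext u
  simp only [Finset.mem_image, Finset.mem_filter, Finset.mem_univ, true_and, Finset.mem_range]
  constructor
  · rintro ⟨i, hi, rfl⟩; exact hi
  · intro hu; exact ⟨⟨u, lt_of_lt_of_le hu hj⟩, hu, rfl⟩

lemma image_sigma_filter (d : ℕ) (σ : Equiv.Perm (Fin d)) (j : ℕ) (hj : j ≤ d) :
    (Finset.univ.filter (fun i : Fin d => ((σ i : Fin d) : ℕ) < j)).image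
      (fun i => ((σ i : Fin d) : ℕ)) = Finset.range j := by
  ext u
  simp only [Finset.mem_image, Finset.mem_filter, Finset.mem_univ, true_and, Finset.mem_range]
  constructor
  · rintro ⟨i, hi, rfl⟩; exact hi
  · intro hu
    refine ⟨σ.symm ⟨u, lt_of_lt_of_le hu hj⟩, ?_, ?_⟩ <;> simp [hu]

lemma sigma_val_injective (d : ℕ) (σ : Equiv.Perm (Fin d)) :
    Function.Injective (fun i : Fin d => ((σ i : Fin d) : ℕ)) :=
  fun _ _ h => σ.injective (Fin.val_injective h)

lemma card_filter_lt (d j : ℕ) (hj : j ≤ d) :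
    (Finset.univ.filter (fun i : Fin d => (i : ℕ) < j)).card = j := by
  rw [← Finset.card_image_of_injective _ Fin.val_injective, image_val_filter_lt d j hj,
    Finset.card_range]

lemma card_filter_sigma_lt (d : ℕ) (σ : Equiv.Perm (Fin d)) (j : ℕ) (hj : j ≤ d) :
    (Finset.univ.filter (fun i : Fin d => ((σ i : Fin d) : ℕ) < j)).card = j := by
  rw [← Finset.card_image_of_injective _ (sigma_val_injective d σ),
    image_sigma_filter d σ j hj, Finset.card_range]

lemma part1_pos (d : ℕ) (hd : 2 ≤ d) (σ : Equiv.Perm (Fin d)) (hσ : IETIrreducible d σ)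
    (j : ℕ) (hj1 : 1 ≤ j) (hj2 : j ≤ d - 1) :
    0 < partialSum d (fun i : Fin d => ((σ i : ℕ) : ℝ) - ((i : ℕ) : ℝ)) j := by
  have hjd : j ≤ d := by omega
  have hjlt : j < d := by omega
  set S := Finset.univ.filter (fun i : Fin d => (i : ℕ) < j) with hS
  have hsplit : partialSum d (fun i : Fin d => ((σ i : ℕ) : ℝ) - ((i : ℕ) : ℝ)) j
      = ((∑ i ∈ S, ((σ i : Fin d) : ℕ) : ℕ) : ℝ) - ((∑ i ∈ S, (i : ℕ) : ℕ) : ℝ) := by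
    rw [partialSum, Finset.sum_sub_distrib]
    push_cast
    rfl
  set U := S.image (fun i => ((σ i : Fin d) : ℕ)) with hU
  have hUcard : U.card = j := by
    rw [hU, Finset.card_image_of_injective _ (sigma_val_injective d σ), hS,
      card_filter_lt d j hjd]
  have hUne : U ≠ Finset.range j := by
    intro h
    apply hσ j hj1 hjlt
    intro i hi
    have hiS : i ∈ S := by simp [hS, hi]
    have : ((σ i : Fin d) : ℕ) ∈ U := Finset.mem_image_of_mem _ hiS
    rw [h, Finset.mem_range] at this
    exact this
  have hsum1 : ∑ i ∈ S, (i : ℕ) = ∑ k ∈ Finset.range j, k := by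
    rw [← image_val_filter_lt d j hjd, Finset.sum_image
      (fun a _ b _ h => Fin.val_injective h)]
  have hsum2 : ∑ i ∈ S, ((σ i : Fin d) : ℕ) = ∑ u ∈ U, u := by
    rw [hU, Finset.sum_image (fun a _ b _ h => sigma_val_injective d σ h)]
  have := sum_range_lt_sum U j hUcard hUne
  rw [hsplit, sub_pos]
  exact_mod_cast by omega

lemma part1_neg (d : ℕ) (hd : 2 ≤ d) (σ : Equiv.Perm (Fin d)) (hσ : IETIrreducible d σ)
    (j : ℕ) (hj1 : 1 ≤ j) (hj2 : j ≤ d - 1) :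
    partialSumPerm d σ (fun i : Fin d => ((σ i : ℕ) : ℝ) - ((i : ℕ) : ℝ)) j < 0 := by
  have hjd : j ≤ d := by omega
  have hjlt : j < d := by omega
  set T := Finset.univ.filter (fun i : Fin d => ((σ i : Fin d) : ℕ) < j) with hT
  have hsplit : partialSumPerm d σ (fun i : Fin d => ((σ i : ℕ) : ℝ) - ((i : ℕ) : ℝ)) j
      = ((∑ i ∈ T, ((σ i : Fin d) : ℕ) : ℕ) : ℝ) - ((∑ i ∈ T, (i : ℕ) : ℕ) : ℝ) := by
    rw [partialSumPerm, Finset.sum_sub_distrib]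
    push_cast
    rfl
  set U := T.image Fin.val with hU
  have hTcard : T.card = j := card_filter_sigma_lt d σ j hjd
  have hUcard : U.card = j := by
    rw [hU, Finset.card_image_of_injective _ Fin.val_injective, hTcard]
  have hUne : U ≠ Finset.range j := by
    intro h
    apply hσ j hj1 hjlt
    set S := Finset.univ.filter (fun i : Fin d => (i : ℕ) < j) with hS
    have hTS : T = S := by
      have himg : T.image Fin.val = S.image Fin.val := by
        rw [← hU] at *
        rw [h, image_val_filter_lt d j hjd]
      exact Finset.image_injective Fin.val_injective himg
    intro i hi
    have hiS : i ∈ S := by simp [hS, hi]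
    rw [← hTS] at hiS
    exact (Finset.mem_filter.mp hiS).2
  have hsum1 : ∑ i ∈ T, (i : ℕ) = ∑ u ∈ U, u := by
    rw [hU, Finset.sum_image (fun a _ b _ h => Fin.val_injective h)]
  have hsum2 : ∑ i ∈ T, ((σ i : Fin d) : ℕ) = ∑ k ∈ Finset.range j, k := by
    rw [← image_sigma_filter d σ j hjd, Finset.sum_image
      (fun a _ b _ h => sigma_val_injective d σ h)]
  have := sum_range_lt_sum U j hUcard hUne
  rw [hsplit, sub_neg]
  exact_mod_cast by omega

lemma qform_single (d : ℕ) (σ : Equiv.Perm (Fin d)) (b : Fin d → ℝ) (i : Fin d) :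
    Qform d σ (Pi.single i 1) b =
      partialSum d b ((i : ℕ) + 1) - partialSumPerm d σ b (((σ i : Fin d) : ℕ) + 1) := by
  rw [Qform, Finset.sum_eq_single i]
  · simp only [Pi.single_eq_same, one_mul]
    have key : ∀ j : Fin d,
        b j * (if (j : ℕ) < (i : ℕ) ∧ ((σ i : Fin d) : ℕ) < ((σ j : Fin d) : ℕ) then (1 : ℝ)
          else if (i : ℕ) < (j : ℕ) ∧ ((σ j : Fin d) : ℕ) < ((σ i : Fin d) : ℕ) then -1 else 0)
        = (if (j : ℕ) < (i : ℕ) + 1 then b j else 0)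
          - (if ((σ j : Fin d) : ℕ) < ((σ i : Fin d) : ℕ) + 1 then b j else 0) := by
      intro j
      by_cases hji : j = i
      · subst hji; simp
      · have h1 : (j : ℕ) ≠ (i : ℕ) := fun h => hji (Fin.val_injective h)
        have h2 : ((σ j : Fin d) : ℕ) ≠ ((σ i : Fin d) : ℕ) :=
          fun h => hji (σ.injective (Fin.val_injective h))
        split_ifs <;> first | (exfalso; omega) | ring1
    rw [Finset.sum_congr rfl (fun j _ => key j), Finset.sum_sub_distrib]
    congr 1
    · rw [partialSum, Finset.sum_filter]
    · rw [partialSumPerm, Finset.sum_filter]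
  · intro b' _ hb'
    simp [Pi.single_eq_of_ne hb']
  · simp

lemma partialSum_total (d : ℕ) (σ : Equiv.Perm (Fin d)) :
    partialSum d (fun i : Fin d => ((σ i : ℕ) : ℝ) - ((i : ℕ) : ℝ)) d = 0 := by
  rw [partialSum]
  have hfil : Finset.univ.filter (fun i : Fin d => (i : ℕ) < d) = Finset.univ := by
    ext i; simp [i.isLt]
  rw [hfil, Finset.sum_sub_distrib]
  rw [Equiv.sum_comp σ (fun i : Fin d => ((i : ℕ) : ℝ)), sub_self]

lemma partialSumPerm_total (d : ℕ) (σ : Equiv.Perm (Fin d)) :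
    partialSumPerm d σ (fun i : Fin d => ((σ i : ℕ) : ℝ) - ((i : ℕ) : ℝ)) d = 0 := by
  rw [partialSumPerm]
  have hfil : Finset.univ.filter (fun i : Fin d => ((σ i : Fin d) : ℕ) < d) = Finset.univ := by
    ext i; simp [(σ i).isLt]
  rw [hfil, Finset.sum_sub_distrib]
  rw [Equiv.sum_comp σ (fun i : Fin d => ((i : ℕ) : ℝ)), sub_self]

lemma not_both_last (d : ℕ) (hd : 2 ≤ d) (σ : Equiv.Perm (Fin d))
    (hσ : IETIrreducible d σ) (i : Fin d) (h1 : (i : ℕ) = d - 1)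
    (h2 : ((σ i : Fin d) : ℕ) = d - 1) : False := by
  apply hσ (d - 1) (by omega) (by omega)
  intro m hm
  have hmi : m ≠ i := by
    intro h; subst h; omega
  have hne : σ m ≠ σ i := fun h => hmi (σ.injective h)
  have hvne : ((σ m : Fin d) : ℕ) ≠ d - 1 := by
    rw [← h2]; exact fun h => hne (Fin.val_injective h)
  have := (σ m).isLt
  omega

lemma qform_pos (d : ℕ) (hd : 2 ≤ d) (σ : Equiv.Perm (Fin d)) (hσ : IETIrreducible d σ)
    (i : Fin d) :
    0 < Qform d σ (Pi.single i 1) (fun i : Fin d => ((σ i : ℕ) : ℝ) - ((i : ℕ) : ℝ)) := by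
  rw [qform_single]
  set b₀ := fun i : Fin d => ((σ i : ℕ) : ℝ) - ((i : ℕ) : ℝ) with hb₀
  have hi : (i : ℕ) < d := i.isLt
  have hσi : ((σ i : Fin d) : ℕ) < d := (σ i).isLt
  by_cases hA : (i : ℕ) + 1 = d
  · have hAz : partialSum d b₀ ((i : ℕ) + 1) = 0 := by
      rw [hA]; exact partialSum_total d σ
    have hB : ((σ i : Fin d) : ℕ) + 1 ≤ d - 1 := by
      rcases Nat.lt_or_ge (((σ i : Fin d) : ℕ) + 1) d with h | h
      · omega
      · exfalso; exact not_both_last d hd σ hσ i (by omega) (by omega)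
    have := part1_neg d hd σ hσ (((σ i : Fin d) : ℕ) + 1) (by omega) hB
    rw [hAz]
    linarith
  · have hApos := part1_pos d hd σ hσ ((i : ℕ) + 1) (by omega) (by omega)
    have hBle : partialSumPerm d σ b₀ (((σ i : Fin d) : ℕ) + 1) ≤ 0 := by
      by_cases hB : ((σ i : Fin d) : ℕ) + 1 = d
      · rw [hB, partialSumPerm_total]
      · have := part1_neg d hd σ hσ (((σ i : Fin d) : ℕ) + 1) (by omega) (by omega)
        linarith
    linarith

lemma exists_interval (d : ℕ) (hd : 1 ≤ d) (a : Fin d → ℝ) (x : ℝ)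
    (hx0 : 0 ≤ x) (hxd : x < partialSum d a d) :
    ∃ i : Fin d, partialSum d a (i : ℕ) ≤ x ∧ x < partialSum d a ((i : ℕ) + 1) := by
  classical
  have hex : ∃ n, x < partialSum d a n := ⟨d, hxd⟩
  have hn : x < partialSum d a (Nat.find hex) := Nat.find_spec hex
  have hn0 : Nat.find hex ≠ 0 := by
    intro h
    have h0 : partialSum d a 0 = 0 := by simp [partialSum]
    rw [h, h0] at hn; linarith
  have hnd : Nat.find hex ≤ d := Nat.find_le hxd
  refine ⟨⟨Nat.find hex - 1, by omega⟩, ?_, ?_⟩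
  · have := Nat.find_min hex (m := Nat.find hex - 1) (by omega)
    push_neg at this
    simpa using this
  · simpa [Nat.sub_add_cancel (by omega : 1 ≤ Nat.find hex)] using hn

/-- For irreducible `σ`, the vector `b₀` with `(b₀)_i = σ(i) - i` satisfies
`y_j(b₀) > 0` and `y'_j(b₀) < 0` for `1 ≤ j ≤ d - 1`; consequently `Q(e_i, b₀) > 0` for all
`i`, and `L_{a,b₀} > 0` on `I_a` for every `a ∈ ℝ₊^d`. -/
theorem masur_vector_positive (d : ℕ) (hd : 2 ≤ d) (σ : Equiv.Perm (Fin d))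
    (hσ : IETIrreducible d σ) :
    (∀ j : ℕ, 1 ≤ j → j ≤ d - 1 →
      0 < partialSum d (fun i : Fin d => ((σ i : ℕ) : ℝ) - ((i : ℕ) : ℝ)) j ∧
      partialSumPerm d σ (fun i : Fin d => ((σ i : ℕ) : ℝ) - ((i : ℕ) : ℝ)) j < 0) ∧
    (∀ i : Fin d,
      0 < Qform d σ (Pi.single i 1) (fun i : Fin d => ((σ i : ℕ) : ℝ) - ((i : ℕ) : ℝ))) ∧
    (∀ a : Fin d → ℝ, (∀ i, 0 < a i) → ∀ x ∈ ietInterval d a,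
      0 < ietL d σ a (fun i : Fin d => ((σ i : ℕ) : ℝ) - ((i : ℕ) : ℝ)) x) := by
  refine ⟨fun j hj1 hj2 => ⟨part1_pos d hd σ hσ j hj1 hj2, part1_neg d hd σ hσ j hj1 hj2⟩,
    fun i => qform_pos d hd σ hσ i, ?_⟩
  intro a ha x hx
  rw [ietInterval, Set.mem_Ico] at hx
  obtain ⟨hx0, hxd⟩ := hx
  rw [ietL]
  have hex : ∃ i : Fin d, partialSum d a (i : ℕ) ≤ x ∧ x < partialSum d a ((i : ℕ) + 1) :=
    exists_interval d (by omega) a x hx0 hxd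
  rw [dif_pos hex]
  have h := qform_pos d hd σ hσ hex.choose
  rw [qform_single] at h
  exact h
end
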